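/- Let s ≥ 2 and 2 ≤ k ≤ s be integers and q an indeterminate. Then in ℚ(q): [s choose k]_q [k]_q (q^{k+1+s} + q^{3-s-k} - q^{k+1-s} - q^{3-k+s}) + [s choose k-1]_q [k-1]_q (q^{k+1} + q^{3-k} - q^{k+1-2s} - q^{3-k+2s}) = 0. -/

import Mathlib

/-- The balanced quantum integer `[m]_q = (q^m - q^{-m})/(q - q^{-1})` in `ℚ(q)`. -/
noncomputable def qInt (m : ℤ) : RatFunc ℚ :=
  (RatFunc.X ^ m - RatFunc.X ^ (-m)) / (RatFunc.X - RatFunc.X⁻¹)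

/-- The balanced quantum factorial `[n]_q!`. -/
noncomputable def qFact : ℕ → RatFunc ℚ
  | 0 => 1
  | n + 1 => qFact n * qInt (n + 1)

/-- The balanced quantum binomial coefficient `[s choose k]_q`. -/
noncomputable def qBinom (s k : ℕ) : RatFunc ℚ :=
  qFact s / (qFact k * qFact (s - k))

lemma X_zpow_ne_one (m : ℤ) (hm : m ≠ 0) : (RatFunc.X : RatFunc ℚ) ^ m ≠ 1 := by
  have base : ∀ n : ℤ, 0 < n → (RatFunc.X : RatFunc ℚ) ^ n ≠ 1 := by
    intro n hn h
    have h1 : (RatFunc.X : RatFunc ℚ) ^ n.toNat = 1 := by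
      rwa [← zpow_natCast, Int.toNat_of_nonneg hn.le]
    rw [← RatFunc.algebraMap_X (K := ℚ), ← map_pow,
      ← map_one (algebraMap (Polynomial ℚ) (RatFunc ℚ))] at h1
    have h2 := RatFunc.algebraMap_injective ℚ h1
    have h3 := congrArg Polynomial.natDegree h2
    simp [Polynomial.natDegree_X_pow] at h3
    omega
  intro h
  rcases lt_or_gt_of_ne hm with hneg | hpos
  · exact base (-m) (by omega) (by rw [zpow_neg, h, inv_one])
  · exact base m hpos h

lemma qInt_num_ne_zero (m : ℤ) (hm : m ≠ 0) :
    (RatFunc.X : RatFunc ℚ) ^ m - RatFunc.X ^ (-m) ≠ 0 := by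
  intro h
  have hX : (RatFunc.X : RatFunc ℚ) ≠ 0 := RatFunc.X_ne_zero
  have h1 : (RatFunc.X : RatFunc ℚ) ^ m = RatFunc.X ^ (-m) := sub_eq_zero.mp h
  have h2 : (RatFunc.X : RatFunc ℚ) ^ (m - -m) = 1 := by
    rw [zpow_sub₀ hX, h1, div_self (zpow_ne_zero _ hX)]
  exact X_zpow_ne_one (m - -m) (by omega) h2

lemma qInt_den_ne_zero : (RatFunc.X : RatFunc ℚ) - RatFunc.X⁻¹ ≠ 0 := by
  have h := qInt_num_ne_zero 1 one_ne_zero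
  simpa [zpow_neg] using h

lemma qInt_ne_zero (m : ℤ) (hm : m ≠ 0) : qInt m ≠ 0 :=
  div_ne_zero (qInt_num_ne_zero m hm) qInt_den_ne_zero

lemma qFact_ne_zero (n : ℕ) : qFact n ≠ 0 := by
  induction n with
  | zero => simp [qFact]
  | succ n ih => exact mul_ne_zero ih (qInt_ne_zero _ (by positivity))

lemma qFact_succ' (k : ℕ) (hk : 1 ≤ k) : qFact k = qFact (k - 1) * qInt (k : ℤ) := by
  obtain ⟨m, rfl⟩ := Nat.exists_eq_add_of_le hk
  have : 1 + m - 1 = m := by omega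
  rw [this]
  have : 1 + m = m + 1 := by omega
  rw [this, qFact]
  norm_num

lemma qBinom_ratio (s k : ℕ) (hk1 : 1 ≤ k) (hk2 : k ≤ s) :
    qBinom s k * qInt (k : ℤ) = qBinom s (k - 1) * qInt ((s : ℤ) - k + 1) := by
  have hsk : s - (k - 1) = (s - k) + 1 := by omega
  have hfk : qFact k = qFact (k - 1) * qInt (k : ℤ) := qFact_succ' k hk1
  have hfs : qFact (s - k + 1) = qFact (s - k) * qInt ((s : ℤ) - k + 1) := by
    rw [qFact]
    congr 1
    congr 1
    push_cast [hk2]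
    ring
  rw [qBinom, qBinom, hsk, hfk, hfs]
  have h1 := qFact_ne_zero (k - 1)
  have h2 := qFact_ne_zero (s - k)
  have h3 : qInt (k : ℤ) ≠ 0 := qInt_ne_zero _ (by positivity)
  have h4 : qInt ((s : ℤ) - k + 1) ≠ 0 := qInt_ne_zero _ (by omega)
  field_simp

lemma key_laurent {F : Type*} [Field F] (t : F) (ht : t ≠ 0) (s k : ℤ) :
    (t^(s-k+1) - t^(-(s-k+1))) * (t^(k+1+s) + t^(3-s-k) - t^(k+1-s) - t^(3-k+s)) +
    (t^(k-1) - t^(-(k-1))) * (t^(k+1) + t^(3-k) - t^(k+1-2*s) - t^(3-k+2*s)) = 0 := by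
  simp only [sub_mul, mul_add, mul_sub, ← zpow_add₀ ht]
  ring_nf

/-- The q-binomial relation used in Lemma "techtrois" of the paper. -/
theorem qbinom_relation (s k : ℕ) (hs : 2 ≤ s) (hk1 : 2 ≤ k) (hk2 : k ≤ s) :
    qBinom s k * qInt (k : ℤ) *
        (RatFunc.X ^ ((k : ℤ) + 1 + s) + RatFunc.X ^ (3 - (s : ℤ) - k) -
          RatFunc.X ^ ((k : ℤ) + 1 - s) - RatFunc.X ^ (3 - (k : ℤ) + s)) +
      qBinom s (k - 1) * qInt ((k : ℤ) - 1) *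
        (RatFunc.X ^ ((k : ℤ) + 1) + RatFunc.X ^ (3 - (k : ℤ)) -
          RatFunc.X ^ ((k : ℤ) + 1 - 2 * s) - RatFunc.X ^ (3 - (k : ℤ) + 2 * s)) = 0 := by
  have hX : (RatFunc.X : RatFunc ℚ) ≠ 0 := RatFunc.X_ne_zero
  have hkey : qInt ((s : ℤ) - k + 1) *
        (RatFunc.X ^ ((k : ℤ) + 1 + s) + RatFunc.X ^ (3 - (s : ℤ) - k) -
          RatFunc.X ^ ((k : ℤ) + 1 - s) - RatFunc.X ^ (3 - (k : ℤ) + s)) +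
      qInt ((k : ℤ) - 1) *
        (RatFunc.X ^ ((k : ℤ) + 1) + RatFunc.X ^ (3 - (k : ℤ)) -
          RatFunc.X ^ ((k : ℤ) + 1 - 2 * s) - RatFunc.X ^ (3 - (k : ℤ) + 2 * s)) = 0 := by
    rw [qInt, qInt, div_mul_eq_mul_div, div_mul_eq_mul_div, ← add_div,
      key_laurent RatFunc.X hX (s : ℤ) (k : ℤ), zero_div]
  rw [qBinom_ratio s k (by omega) hk2, mul_assoc, mul_assoc, ← mul_add, hkey, mul_zero]
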